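/- Let 1 < p < ∞. There exists a constant C(p) > 0, depending only on p, such that for every finite-dimensional real inner product space X and all z, w ∈ X one has |V_p(z + w)| ≤ C(p)·(|V_p(z)| + |V_p(w)|). -/

import Mathlib

/-!
With `α = (p - 2) / 4`, `‖V_p z‖ = φ ‖z‖` for `φ t = t (1 + t²)^α`. Since `α ≥ -1/2`,
`φ = (t / √(1 + t²)) · (1 + t²)^(α + 1/2)` is a product of nonnegative increasing functions, and
`φ (2t) ≤ 2 max(1, 4^α) φ t` because `1 + t² ≤ 1 + 4t² ≤ 4(1 + t²)`. Hence
`φ ‖z + w‖ ≤ φ (2 max(‖z‖, ‖w‖)) ≤ C φ (max(‖z‖, ‖w‖)) ≤ C (φ ‖z‖ + φ ‖w‖)`.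
-/

open MeasureTheory Metric Filter Topology

/-- The `V`-function `V_p(z) = (1+|z|^2)^{(p-2)/4} z`. -/
noncomputable def Vp (p : ℝ) {X : Type*} [NormedAddCommGroup X] [NormedSpace ℝ X] (z : X) : X :=
  ((1 + ‖z‖ ^ 2) ^ ((p - 2) / 4)) • z

open Real Set

lemma monotoneOn_div_sqrt_one_add_sq : MonotoneOn (fun t : ℝ => t / √(1 + t ^ 2)) (Ici 0) := by
  intro t (ht : 0 ≤ t) s (hs : 0 ≤ s) hts
  dsimp only
  rw [div_le_div_iff₀ (by positivity) (by positivity)]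
  have key : (t * √(1 + s ^ 2)) ^ 2 ≤ (s * √(1 + t ^ 2)) ^ 2 := by
    rw [mul_pow, mul_pow, sq_sqrt (by positivity), sq_sqrt (by positivity)]
    nlinarith [mul_le_mul hts hts ht hs]
  exact (pow_le_pow_iff_left₀ (by positivity) (by positivity) two_ne_zero).1 key

lemma monotoneOn_mul_one_add_sq_rpow {α : ℝ} (hα : -(1 / 2) ≤ α) :
    MonotoneOn (fun t : ℝ => t * (1 + t ^ 2) ^ α) (Ici 0) := by
  have hsplit (t : ℝ) :
      t * (1 + t ^ 2) ^ α = t / √(1 + t ^ 2) * (1 + t ^ 2) ^ (α + 1 / 2) := by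
    have hpos : 0 < 1 + t ^ 2 := by positivity
    rw [rpow_add hpos, ← sqrt_eq_rpow]
    field_simp
  simp only [hsplit]
  refine monotoneOn_div_sqrt_one_add_sq.mul ?_ (fun t (ht : 0 ≤ t) => by positivity)
    (fun t _ => by positivity)
  intro t (ht : 0 ≤ t) s (hs : 0 ≤ s) hts
  exact rpow_le_rpow (by positivity) (by nlinarith) (by linarith)

lemma one_add_sq_two_mul_rpow_le (α t : ℝ) :
    (1 + (2 * t) ^ 2) ^ α ≤ max 1 (4 ^ α) * (1 + t ^ 2) ^ α := by
  rcases le_or_gt 0 α with hα | hα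
  · calc (1 + (2 * t) ^ 2) ^ α ≤ (4 * (1 + t ^ 2)) ^ α :=
          rpow_le_rpow (by positivity) (by nlinarith) hα
      _ = 4 ^ α * (1 + t ^ 2) ^ α := mul_rpow (by norm_num) (by positivity)
      _ ≤ max 1 (4 ^ α) * (1 + t ^ 2) ^ α := by gcongr; exact le_max_right _ _
  · calc (1 + (2 * t) ^ 2) ^ α ≤ 1 * (1 + t ^ 2) ^ α := by
          rw [one_mul]; exact rpow_le_rpow_of_nonpos (by positivity) (by nlinarith) hα.le
      _ ≤ max 1 (4 ^ α) * (1 + t ^ 2) ^ α := by gcongr; exact le_max_left _ _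

lemma le_mul_add_of_monotoneOn_of_doubling {φ : ℝ → ℝ} {K : ℝ} (hK : 0 ≤ K)
    (hmono : MonotoneOn φ (Ici 0)) (hnonneg : ∀ t, 0 ≤ t → 0 ≤ φ t)
    (hdouble : ∀ t, 0 ≤ t → φ (2 * t) ≤ K * φ t) {a b c : ℝ} (ha : 0 ≤ a) (hb : 0 ≤ b)
    (hc : 0 ≤ c) (hcab : c ≤ a + b) : φ c ≤ K * (φ a + φ b) := by
  wlog hba : b ≤ a generalizing a b
  · simpa only [add_comm] using this hb ha (by linarith) (by linarith)
  calc φ c ≤ φ (2 * a) := hmono hc (by simp; linarith) (by linarith)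
    _ ≤ K * φ a := hdouble a ha
    _ ≤ K * (φ a + φ b) := by gcongr; linarith [hnonneg b hb]

lemma norm_Vp (p : ℝ) {X : Type*} [NormedAddCommGroup X] [NormedSpace ℝ X] (z : X) :
    ‖Vp p z‖ = ‖z‖ * (1 + ‖z‖ ^ 2) ^ ((p - 2) / 4) := by
  rw [Vp, norm_smul, Real.norm_eq_abs, abs_of_nonneg (by positivity), mul_comm]

theorem Vp_add.{u} (p : ℝ) (hp : 1 < p) :
    ∃ C : ℝ, 0 < C ∧
      ∀ (X : Type u) [NormedAddCommGroup X] [InnerProductSpace ℝ X] [FiniteDimensional ℝ X],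
        ∀ z w : X, ‖Vp p (z + w)‖ ≤ C * (‖Vp p z‖ + ‖Vp p w‖) := by
  set α := (p - 2) / 4 with hα
  refine ⟨2 * max 1 (4 ^ α), by positivity, fun X _ _ _ z w => ?_⟩
  have hdouble (t : ℝ) (ht : 0 ≤ t) :
      2 * t * (1 + (2 * t) ^ 2) ^ α ≤ 2 * max 1 (4 ^ α) * (t * (1 + t ^ 2) ^ α) := by
    have := one_add_sq_two_mul_rpow_le α t
    calc 2 * t * (1 + (2 * t) ^ 2) ^ α ≤ 2 * t * (max 1 (4 ^ α) * (1 + t ^ 2) ^ α) := by gcongr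
      _ = _ := by ring
  simp only [norm_Vp]
  exact le_mul_add_of_monotoneOn_of_doubling (by positivity)
    (monotoneOn_mul_one_add_sq_rpow (by rw [hα]; linarith)) (fun t ht => by positivity) hdouble
    (norm_nonneg z) (norm_nonneg w) (norm_nonneg _) (norm_add_le z w)
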